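/- arXiv:2007.11721 — 2 statements merged into one kernel-verified Lean document; each statement's English description precedes it below -/
import Mathlib

section
/- Let T = Pf(ω_𝒫) for a parsed word ω_𝒫 ∈ P([n]^{⊗k}). Then the number of columns of the left-justified representative *T equals the length of the longest weakly decreasing subword of ω (a subword being a subsequence of letters of ω, in order but not necessarily contiguous). -/
namespace PerfTab

/-- A rectangular tableau: `entry r j` is the content of the box in row `r`
(row `0` is the top row) and column `j` (column `0` is leftmost); `none` is a blank. -/
structure Tab where
  entry : ℕ → ℕ → Option ℕ
  rows : ℕ
  cols : ℕ

/-- The perforated-tableau conditions. -/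
structure IsPTab (T : Tab) : Prop where
  pos : ∀ r j v, T.entry r j = some v → 0 < v
  row_bound : ∀ r j, T.rows ≤ r → T.entry r j = none
  col_bound : ∀ r j, T.cols ≤ j → T.entry r j = none
  no_blank_col : ∀ j < T.cols, ∃ r, (T.entry r j).isSome
  strip : ∀ v r r' j j', T.entry r j = some v → T.entry r' j' = some v → r < r' → j' < j
  shadow : ∀ v w r₁ j₁ r₂ j₂, T.entry r₁ j₁ = some v → T.entry r₂ j₂ = some w →
    v < w → r₁ < r₂ ∨ j₁ < j₂

/-- One swap of a blank with a horizontally adjacent non-blank entry, both sides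
being valid ptableaux with the same dimensions. -/
def SwapStep (T T' : Tab) : Prop :=
  IsPTab T ∧ IsPTab T' ∧ T.rows = T'.rows ∧ T.cols = T'.cols ∧
  ∃ r j,
    ((T.entry r j = none ∧ (T.entry r (j + 1)).isSome) ∨
      ((T.entry r j).isSome ∧ T.entry r (j + 1) = none)) ∧
    T'.entry r j = T.entry r (j + 1) ∧ T'.entry r (j + 1) = T.entry r j ∧
    ∀ r' j', ¬(r' = r ∧ (j' = j ∨ j' = j + 1)) → T'.entry r' j' = T.entry r' j'

/-- Row equivalence of perforated tableaux. -/
def RowEquiv (T T' : Tab) : Prop :=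
  IsPTab T ∧ IsPTab T' ∧ Relation.ReflTransGen SwapStep T T'

/-- The (increasing) list of columns of the non-blank boxes in row `r`. -/
def filledCols (T : Tab) (r : ℕ) : List ℕ :=
  (List.range T.cols).filter fun j => (T.entry r j).isSome

/-- The list of values in row `r`, read left to right. -/
def rowVals (T : Tab) (r : ℕ) : List ℕ :=
  (List.range T.cols).filterMap fun j => T.entry r j

def blanksInRow (T : Tab) (r : ℕ) : ℕ :=
  ((List.range T.cols).filter fun j => (T.entry r j).isNone).length

/-- Number of filled boxes in row `r` (the `r`-th component of the weight). -/
def rowFill (T : Tab) (r : ℕ) : ℕ := (filledCols T r).length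

def rowCount (T : Tab) (v r : ℕ) : ℕ :=
  ((List.range T.cols).filter fun j => decide (T.entry r j = some v)).length

/-- Number of boxes with value `v` in rows `a` through `b` (inclusive, 0-indexed). -/
def countValRows (T : Tab) (v a b : ℕ) : ℕ :=
  ((List.range (b + 1 - a)).map fun t => rowCount T v (a + t)).sum

def totalCount (T : Tab) (v : ℕ) : ℕ :=
  ((List.range T.rows).map fun r => rowCount T v r).sum

/-- `T` is left-justified: each entry of `T` is weakly to the left of the
corresponding entry in every row-equivalent ptableau. -/
def LeftJustified (T : Tab) : Prop :=
  ∀ T', RowEquiv T T' → ∀ r, List.Forall₂ (· ≤ ·) (filledCols T r) (filledCols T' r)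

def RightJustified (T : Tab) : Prop :=
  ∀ T', RowEquiv T T' → ∀ r, List.Forall₂ (fun a b => b ≤ a) (filledCols T r) (filledCols T' r)

/-! ### Words and parsings -/

/-- A word in `[n]^{⊗ k}` for some `k ≥ 1`. -/
def IsWord (n : ℕ) (w : List ℕ) : Prop := w ≠ [] ∧ ∀ a ∈ w, 1 ≤ a ∧ a ≤ n

def flatP : List (List ℕ) → List ℕ
  | [] => []
  | h :: t => h ++ flatP t

/-- A parsed word over `[n]`: a list of weakly decreasing factors with letters in `[n]`. -/
def IsParsedWord (n : ℕ) (P : List (List ℕ)) : Prop :=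
  (∀ h ∈ P, List.Chain' (fun a b => b ≤ a) h) ∧ ∀ h ∈ P, ∀ a ∈ h, 1 ≤ a ∧ a ≤ n

/-- The minimal parsing of a word into maximal weakly decreasing factors. -/
def minParse : List ℕ → List (List ℕ)
  | [] => []
  | a :: t =>
    match t, minParse t with
    | b :: _, h :: rest => if b ≤ a then (a :: h) :: rest else [a] :: h :: rest
    | _, _ => [[a]]

/-! ### The map `Pf` from parsed words to perforated tableaux -/

/-- Column at which the next box in row `row` is placed: one more than the largest
column used so far in rows weakly below `row`. -/
def pfCol (placed : List (ℕ × ℕ × ℕ)) (row : ℕ) : ℕ :=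
  (placed.filterMap fun b => if row ≤ b.1 then some (b.2.1 + 1) else none).foldr max 0

/-- Greedy placement of indexed letters: a letter `a` of the `s`-th factor becomes a
box with value `s` in row `a - 1`.  Boxes are triples `(row, col, value)`. -/
def pfBoxes : List (ℕ × ℕ) → List (ℕ × ℕ × ℕ) → List (ℕ × ℕ × ℕ)
  | [], placed => placed
  | sa :: rest, placed =>
    pfBoxes rest (placed ++ [(sa.2 - 1, pfCol placed (sa.2 - 1), sa.1)])

def indexedLetters : List (List ℕ) → ℕ → List (ℕ × ℕ)
  | [], _ => []
  | h :: t, s => (h.map fun a => (s, a)) ++ indexedLetters t (s + 1)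

/-- The perforated tableau (in left-justified form) associated to a parsed word. -/
def Pf (P : List (List ℕ)) (n : ℕ) : Tab :=
  let boxes := pfBoxes (indexedLetters P 1) []
  { entry := fun r j =>
      boxes.findSome? fun b => if b.1 = r ∧ b.2.1 = j then some b.2.2 else none
    rows := n
    cols := (boxes.map fun b => b.2.1 + 1).foldr max 0 }

def splitLens : List ℕ → List ℕ → List (List ℕ)
  | [], _ => []
  | l :: ls, w => w.take l :: splitLens ls (w.drop l)

/-- Re-parse the word `w` using the factor lengths of the parsing `P`. -/
def reparse (P : List (List ℕ)) (w : List ℕ) : List (List ℕ) :=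
  splitLens (P.map List.length) w

/-- A minimally parsed ptableau: the head of the `(v+1)`-strip lies strictly below
the tail of the `v`-strip. -/
def MinimallyParsed (T : Tab) : Prop :=
  ∀ v, 1 ≤ v → (∃ r j, T.entry r j = some (v + 1)) →
    ∃ r j r' j', T.entry r j = some (v + 1) ∧ T.entry r' j' = some v ∧ r' < r

/-! ### Kashiwara crystal operators on words -/

def ce (i : ℕ) (w : List ℕ) (j : ℕ) : ℤ :=
  ((w.take j).count (i + 1) : ℤ) - ((w.take (j - 1)).count i : ℤ)

def cf (i : ℕ) (w : List ℕ) (j : ℕ) : ℤ :=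
  ((w.drop (j - 1)).count i : ℤ) - ((w.drop j).count (i + 1) : ℤ)

def maxOver (k : ℕ) (g : ℕ → ℤ) : ℤ := ((List.range k).map g).foldr max (g 0)

/-- The raising operator `e_i` on words (Kashiwara convention). -/
def wordE (i : ℕ) (w : List ℕ) : Option (List ℕ) :=
  if w.length = 0 then none
  else
    let M := maxOver w.length fun j0 => ce i w (j0 + 1)
    match (List.range w.length).find? fun j0 => decide (ce i w (j0 + 1) = M) with
    | some j0 => if w.getD j0 0 = i + 1 then some (w.set j0 i) else none
    | none => none

/-- The lowering operator `f_i` on words (Kashiwara convention). -/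
def wordF (i : ℕ) (w : List ℕ) : Option (List ℕ) :=
  if w.length = 0 then none
  else
    let M := maxOver w.length fun j0 => cf i w (j0 + 1)
    if M ≤ 0 then none
    else
      match (List.range w.length).reverse.find? fun j0 => decide (cf i w (j0 + 1) = M) with
      | some j0 => if w.getD j0 0 = i then some (w.set j0 (i + 1)) else none
      | none => none

/-! ### Crystal operators on perforated tableaux -/

/-- `T[i,i+1]`: the two-row tableau formed by rows `i` and `i+1` of `T`,
with all-blank columns deleted. -/
def rowPair (T : Tab) (i : ℕ) : Tab :=
  let keep := (List.range T.cols).filter fun j =>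
    (T.entry i j).isSome || (T.entry (i + 1) j).isSome
  { entry := fun r j =>
      if r < 2 ∧ j < keep.length then T.entry (i + r) (keep.getD j 0) else none
    rows := 2
    cols := keep.length }

/-- `T'` is obtained from `T` by the ptableau raising operator for the row pair
`(i, i+1)` (`0`-indexed), the swap occurring in column `c'` of the left-justified
representative: in `*T[i,i+1]` the rightmost bottom-row entry with a blank directly
above it is the `k`-th filled box of the bottom row; the corresponding `k`-th filled
box of row `i+1` of `*T`, in column `c'`, is swapped with the blank above it. -/
def PtabEAt (i c' : ℕ) (T T' : Tab) : Prop :=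
  ∃ (L L₂ : Tab) (k c : ℕ),
    RowEquiv T L ∧ LeftJustified L ∧
    RowEquiv (rowPair T i) L₂ ∧ LeftJustified L₂ ∧
    (filledCols L₂ 1)[k]? = some c ∧ L₂.entry 0 c = none ∧
    (∀ c₂, (L₂.entry 1 c₂).isSome → L₂.entry 0 c₂ = none → c₂ ≤ c) ∧
    (filledCols L (i + 1))[k]? = some c' ∧ L.entry i c' = none ∧
    T'.rows = L.rows ∧ T'.cols = L.cols ∧
    T'.entry i c' = L.entry (i + 1) c' ∧ T'.entry (i + 1) c' = none ∧
    ∀ r j, ¬(j = c' ∧ (r = i ∨ r = i + 1)) → T'.entry r j = L.entry r j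

def PtabE (i : ℕ) (T T' : Tab) : Prop := ∃ c', PtabEAt i c' T T'

/-- `e_i(T) = NULL`: no bottom-row entry of `*T[i,i+1]` has a blank above it. -/
def PtabENull (i : ℕ) (T : Tab) : Prop :=
  ∀ L₂, RowEquiv (rowPair T i) L₂ → LeftJustified L₂ →
    ∀ c, (L₂.entry 1 c).isSome → (L₂.entry 0 c).isSome

/-- `T'` is obtained from `T` by the ptableau lowering operator for the row pair
`(i, i+1)` (`0`-indexed), the swap occurring in column `c'` of the right-justified
representative. -/
def PtabFAt (i c' : ℕ) (T T' : Tab) : Prop :=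
  ∃ (R R₂ : Tab) (k c : ℕ),
    RowEquiv T R ∧ RightJustified R ∧
    RowEquiv (rowPair T i) R₂ ∧ RightJustified R₂ ∧
    (filledCols R₂ 0)[k]? = some c ∧ R₂.entry 1 c = none ∧
    (∀ c₂, (R₂.entry 0 c₂).isSome → R₂.entry 1 c₂ = none → c ≤ c₂) ∧
    (filledCols R i)[k]? = some c' ∧ R.entry (i + 1) c' = none ∧
    T'.rows = R.rows ∧ T'.cols = R.cols ∧
    T'.entry (i + 1) c' = R.entry i c' ∧ T'.entry i c' = none ∧
    ∀ r j, ¬(j = c' ∧ (r = i ∨ r = i + 1)) → T'.entry r j = R.entry r j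

def PtabF (i : ℕ) (T T' : Tab) : Prop := ∃ c', PtabFAt i c' T T'

def PtabFNull (i : ℕ) (T : Tab) : Prop :=
  ∀ R₂, RowEquiv (rowPair T i) R₂ → RightJustified R₂ →
    ∀ c, (R₂.entry 0 c).isSome → (R₂.entry 1 c).isSome

/-- Highest weight: all raising operators are `NULL`. -/
def HighestWeight (T : Tab) : Prop := ∀ i, i + 1 < T.rows → PtabENull i T

/-- Lowest weight: all lowering operators are `NULL`. -/
def LowestWeight (T : Tab) : Prop := ∀ i, i + 1 < T.rows → PtabFNull i T

/-! ### Rotation -/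

def rotTab (l : ℕ) (T : Tab) : Tab :=
  { entry := fun r j =>
      if r < T.rows ∧ j < T.cols then
        (T.entry (T.rows - 1 - r) (T.cols - 1 - j)).map fun v => l + 1 - v
      else none
    rows := T.rows
    cols := T.cols }

def rotWord (n : ℕ) (w : List ℕ) : List ℕ := (w.map fun a => n + 1 - a).reverse

def rotParse (n : ℕ) (P : List (List ℕ)) : List (List ℕ) :=
  (P.map fun h => rotWord n h).reverse

/-! ### Shapes -/

/-- Partition-shaped: no blank of the left-justified representative has content
to its right or below it. -/
def PartitionShaped (T : Tab) : Prop :=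
  ∀ L, RowEquiv T L → LeftJustified L →
    ∀ r j, r < L.rows → j < L.cols → L.entry r j = none →
      (∀ j', j ≤ j' → L.entry r j' = none) ∧ ∀ r', r ≤ r' → L.entry r' j = none

/-- Anti-partition-shaped: no blank of the right-justified representative has content
to its left or above it. -/
def AntiPartitionShaped (T : Tab) : Prop :=
  ∀ R, RowEquiv T R → RightJustified R →
    ∀ r j, r < R.rows → j < R.cols → R.entry r j = none →
      (∀ j' ≤ j, R.entry r j' = none) ∧ ∀ r' ≤ r, R.entry r' j = none

def IsPartitionList (lam : List ℕ) : Prop := List.Chain' (fun a b => b ≤ a) lam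

/-- `T` is partition-shaped of shape `lam`. -/
def ShapeOf (T : Tab) (lam : List ℕ) : Prop :=
  PartitionShaped T ∧ ∀ r, rowFill T r = lam.getD r 0

/-! ### Tensor products -/

/-- `W = T ⊗ U` (with the entries of `U` shifted up by `l`): `W` is a left-justified
ptableau with the same rows as `T` whose row contents are those of `T` followed by
those of `U` shifted by `l`. -/
def IsTensor (l : ℕ) (T U W : Tab) : Prop :=
  IsPTab W ∧ LeftJustified W ∧ W.rows = T.rows ∧
  ∀ r, rowVals W r = rowVals T r ++ (rowVals U r).map (· + l)

/-! ### Crystal graphs -/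

def TabRel (T T' : Tab) : Prop :=
  RowEquiv T T' ∨ ∃ i, i + 1 < T.rows ∧ (PtabE i T T' ∨ PtabF i T T')

/-- Membership in the connected crystal generated by `T₀`. -/
def InCrystal (T₀ T : Tab) : Prop :=
  Relation.ReflTransGen (fun a b => TabRel a b ∨ TabRel b a) T₀ T

def WordRel (n : ℕ) (w w' : List ℕ) : Prop :=
  ∃ i, 1 ≤ i ∧ i < n ∧ (wordE i w = some w' ∨ wordF i w = some w')

def InWordCrystal (n : ℕ) (w₀ w : List ℕ) : Prop :=
  Relation.ReflTransGen (fun a b => WordRel n a b ∨ WordRel n b a) w₀ w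

/-! ### Semistandard Young tableaux and the word condition -/

/-- A semistandard Young tableau presented as its list of rows. -/
def IsSSYTrows (P : List (List ℕ)) : Prop :=
  (∀ row ∈ P, row ≠ []) ∧
  (∀ row ∈ P, ∀ a ∈ row, 1 ≤ a) ∧
  (∀ row ∈ P, List.Chain' (· ≤ ·) row) ∧
  List.Chain' (fun r₁ r₂ => r₂.length ≤ r₁.length) P ∧
  ∀ i, i + 1 < P.length → ∀ j, j < (P.getD (i + 1) []).length →
    (P.getD i []).getD j 0 < (P.getD (i + 1) []).getD j 0

/-- The word condition on ptableaux: `T = Pf(ω)` for `ω` the row-reading word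
(rows right-to-left, top to bottom) of a semistandard Young tableau; the reading
word parsed by rows is its minimal parsing. -/
def WordCond (n : ℕ) (T : Tab) : Prop :=
  ∃ P, IsSSYTrows P ∧ (∀ row ∈ P, ∀ a ∈ row, a ≤ n) ∧
    RowEquiv T (Pf (P.map List.reverse) n)

/-- The highest weight ptableau `T_ν`: row `r` consists of `ν_r` copies of `r + 1`. -/
def Tnu (n : ℕ) (nu : List ℕ) : Tab :=
  { entry := fun r j => if r < n ∧ j < nu.getD r 0 then some (r + 1) else none
    rows := n
    cols := nu.foldr max 0 }

/-! ### Skew shapes and jeu de taquin -/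

def NWblank (S : Tab) (r j : ℕ) : Prop := ∀ r' ≤ r, ∀ j' ≤ j, S.entry r' j' = none

def SEblank (S : Tab) (r j : ℕ) : Prop := ∀ r', r ≤ r' → ∀ j', j ≤ j' → S.entry r' j' = none

/-- A skew-shaped form: every blank belongs either to a partition-shaped collection
in the upper left corner or to an anti-partition-shaped collection in the lower
right corner. -/
def SkewForm (S : Tab) : Prop :=
  ∀ r < S.rows, ∀ j < S.cols, S.entry r j = none → NWblank S r j ∨ SEblank S r j

def SkewShaped (T : Tab) : Prop := ∃ S, RowEquiv T S ∧ SkewForm S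

/-- An inner corner: a blank with content directly to its right and directly below it. -/
def InnerCorner (S : Tab) (p : ℕ × ℕ) : Prop :=
  S.entry p.1 p.2 = none ∧ (S.entry p.1 (p.2 + 1)).isSome ∧ (S.entry (p.1 + 1) p.2).isSome

/-- An outer corner: a blank with content directly to its left and directly above it,
and only blanks weakly below-right of it. -/
def OuterCorner (S : Tab) (p : ℕ × ℕ) : Prop :=
  S.entry p.1 p.2 = none ∧ 1 ≤ p.1 ∧ 1 ≤ p.2 ∧
  (S.entry (p.1 - 1) p.2).isSome ∧ (S.entry p.1 (p.2 - 1)).isSome ∧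
  SEblank S p.1 p.2

def RowsWeak (S : Tab) : Prop :=
  ∀ r j j', j ≤ j' → ∀ v v', S.entry r j = some v → S.entry r j' = some v' → v ≤ v'

def ColsStrict (S : Tab) : Prop :=
  ∀ r r' j, r < r' → ∀ v v', S.entry r j = some v → S.entry r' j = some v' → v < v'

/-- Swap the blank at `p` with the content at `q`, leaving everything else unchanged. -/
def blankSwap (S : Tab) (p q : ℕ × ℕ) (S' : Tab) : Prop :=
  S'.rows = S.rows ∧ S'.cols = S.cols ∧
  S.entry p.1 p.2 = none ∧ (S.entry q.1 q.2).isSome ∧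
  S'.entry p.1 p.2 = S.entry q.1 q.2 ∧ S'.entry q.1 q.2 = none ∧
  ∀ x : ℕ × ℕ, x ≠ p → x ≠ q → S'.entry x.1 x.2 = S.entry x.1 x.2

/-- One outward jeu de taquin slide: the blank at `p` swaps with the entry to its
right or the entry below it, the unique choice keeping rows weakly increasing and
columns strictly increasing on non-blank entries. -/
def OutStep (S : Tab) (p : ℕ × ℕ) (S' : Tab) (q : ℕ × ℕ) : Prop :=
  (q = (p.1, p.2 + 1) ∨ q = (p.1 + 1, p.2)) ∧ blankSwap S p q S' ∧
  RowsWeak S' ∧ ColsStrict S'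

/-- One inward jeu de taquin slide: the blank at `p` swaps with the entry above it
if that entry is `≥` the entry to its left (or if there is no entry to the left),
and with the entry to its left otherwise. -/
def InStep (S : Tab) (p : ℕ × ℕ) (S' : Tab) (q : ℕ × ℕ) : Prop :=
  blankSwap S p q S' ∧
  ((q = (p.1 - 1, p.2) ∧ 1 ≤ p.1 ∧ (S.entry (p.1 - 1) p.2).isSome ∧
      ∀ b c, S.entry (p.1 - 1) p.2 = some b → S.entry p.1 (p.2 - 1) = some c → c ≤ b) ∨
    (q = (p.1, p.2 - 1) ∧ 1 ≤ p.2 ∧ (S.entry p.1 (p.2 - 1)).isSome ∧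
      (p.1 = 0 ∨ S.entry (p.1 - 1) p.2 = none ∨
        ∃ b c, S.entry (p.1 - 1) p.2 = some b ∧ S.entry p.1 (p.2 - 1) = some c ∧ b < c)))

/-- Outward jeu de taquin of a blank, recording the path of positions it occupies. -/
inductive OutJdtPath : Tab → List (ℕ × ℕ) → Tab → Prop
  | done (S : Tab) (p : ℕ × ℕ) :
      S.entry p.1 (p.2 + 1) = none → S.entry (p.1 + 1) p.2 = none →
      OutJdtPath S [p] S
  | step (S S₁ S' : Tab) (p q : ℕ × ℕ) (rest : List (ℕ × ℕ)) :
      OutStep S p S₁ q → OutJdtPath S₁ (q :: rest) S' →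
      OutJdtPath S (p :: q :: rest) S'

/-- Inward jeu de taquin of a blank, recording the path of positions it occupies. -/
inductive InJdtPath : Tab → List (ℕ × ℕ) → Tab → Prop
  | done (S : Tab) (p : ℕ × ℕ) :
      (p.1 = 0 ∨ S.entry (p.1 - 1) p.2 = none) →
      (p.2 = 0 ∨ S.entry p.1 (p.2 - 1) = none) →
      InJdtPath S [p] S
  | step (S S₁ S' : Tab) (p q : ℕ × ℕ) (rest : List (ℕ × ℕ)) :
      InStep S p S₁ q → InJdtPath S₁ (q :: rest) S' →
      InJdtPath S (p :: q :: rest) S'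

/-- One evacuation stage: complete inward jeu de taquin from an outer corner. -/
def EvacStep (S S' : Tab) : Prop :=
  ∃ p path, OuterCorner S p ∧ InJdtPath S (p :: path) S'

/-- `S'` is the result of the Schützenberger evacuation procedure applied to `S`. -/
def IsEvac (S S' : Tab) : Prop :=
  Relation.ReflTransGen EvacStep S S' ∧ ∀ p, ¬ OuterCorner S' p

/-! ### Two-colored configurations and the Push algorithms -/

/-- A two-colored configuration: `false` marks μ-content, `true` marks ν-content. -/
def SwitchConfig : Type := ℕ → ℕ → Option (Bool × ℕ)

def toConfig (l : ℕ) (W : Tab) : SwitchConfig := fun r j =>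
  (W.entry r j).map fun v => if v ≤ l then (false, v) else (true, v - l)

/-- Recover a tableau from a configuration, the ν-content keeping its values and the
μ-content shifted up by `m` (so the result reads as `T_ν ⊗ T'`). -/
def configToTab (m rows cols : ℕ) (C : SwitchConfig) : Tab :=
  { entry := fun r j => (C r j).map fun b => if b.1 then b.2 else b.2 + m
    rows := rows
    cols := cols }

def colorPart (b : Bool) (C : SwitchConfig) : ℕ → ℕ → Option ℕ := fun r j =>
  match C r j with
  | some bv => if bv.1 = b then some bv.2 else none
  | none => none

/-- BSS-perforated: ignoring blanks, rows weakly increase and columns strictly increase. -/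
def BSSPerf (f : ℕ → ℕ → Option ℕ) : Prop :=
  (∀ r j j', j ≤ j' → ∀ v v', f r j = some v → f r j' = some v' → v ≤ v') ∧
  ∀ r r' j, r < r' → ∀ v v', f r j = some v → f r' j = some v' → v < v'

/-- A BSS perforated pair: both color classes are BSS-perforated. -/
def BSSPair (C : SwitchConfig) : Prop :=
  BSSPerf (colorPart false C) ∧ BSSPerf (colorPart true C)

/-- Switch a μ-box at `p` with a ν-box immediately to its right or below it,
both configurations forming BSS perforated pairs. -/
def SwitchAt (C : SwitchConfig) (p q : ℕ × ℕ) (C' : SwitchConfig) : Prop :=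
  (q = (p.1, p.2 + 1) ∨ q = (p.1 + 1, p.2)) ∧
  (∃ v, C p.1 p.2 = some (false, v)) ∧ (∃ w, C q.1 q.2 = some (true, w)) ∧
  C' p.1 p.2 = C q.1 q.2 ∧ C' q.1 q.2 = C p.1 p.2 ∧
  (∀ x : ℕ × ℕ, x ≠ p → x ≠ q → C' x.1 x.2 = C x.1 x.2) ∧
  BSSPair C ∧ BSSPair C'

/-- Switch a ν-box at `p` with a μ-box immediately to its left or above it. -/
def SwitchAtIn (C : SwitchConfig) (p q : ℕ × ℕ) (C' : SwitchConfig) : Prop :=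
  ((q = (p.1, p.2 - 1) ∧ 1 ≤ p.2) ∨ (q = (p.1 - 1, p.2) ∧ 1 ≤ p.1)) ∧
  (∃ w, C p.1 p.2 = some (true, w)) ∧ (∃ v, C q.1 q.2 = some (false, v)) ∧
  C' p.1 p.2 = C q.1 q.2 ∧ C' q.1 q.2 = C p.1 p.2 ∧
  (∀ x : ℕ × ℕ, x ≠ p → x ≠ q → C' x.1 x.2 = C x.1 x.2) ∧
  BSSPair C ∧ BSSPair C'

/-- The μ-box at `p` has a ν-box immediately to its right or below it. -/
def NuAdj (C : SwitchConfig) (p : ℕ × ℕ) : Prop :=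
  ∃ q : ℕ × ℕ, (q = (p.1, p.2 + 1) ∨ q = (p.1 + 1, p.2)) ∧ ∃ w, C q.1 q.2 = some (true, w)

/-- The ν-box at `p` has a μ-box immediately to its left or above it. -/
def MuAdj (C : SwitchConfig) (p : ℕ × ℕ) : Prop :=
  ∃ q : ℕ × ℕ, ((q = (p.1, p.2 - 1) ∧ 1 ≤ p.2) ∨ (q = (p.1 - 1, p.2) ∧ 1 ≤ p.1)) ∧
    ∃ v, C q.1 q.2 = some (false, v)

/-- Push Down order: choose a μ-box of the largest value having ν-content adjacent
below or to the right; among those, the rightmost one. -/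
def MuChoice (C : SwitchConfig) (p : ℕ × ℕ) : Prop :=
  (∃ v, C p.1 p.2 = some (false, v)) ∧ NuAdj C p ∧
  ∀ (p' : ℕ × ℕ) (v v' : ℕ), C p.1 p.2 = some (false, v) → C p'.1 p'.2 = some (false, v') →
    NuAdj C p' → v' < v ∨ (v' = v ∧ p'.2 ≤ p.2)

/-- Push Up order: choose a ν-box of the smallest value having μ-content adjacent
above or to the left; among those, the leftmost one. -/
def NuChoice (C : SwitchConfig) (p : ℕ × ℕ) : Prop :=
  (∃ w, C p.1 p.2 = some (true, w)) ∧ MuAdj C p ∧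
  ∀ (p' : ℕ × ℕ) (w w' : ℕ), C p.1 p.2 = some (true, w) → C p'.1 p'.2 = some (true, w') →
    MuAdj C p' → w < w' ∨ (w' = w ∧ p.2 ≤ p'.2)

/-- Complete outward evacuation of the μ-box at `p` through the ν-content. -/
inductive EvacOutConfig : SwitchConfig → ℕ × ℕ → SwitchConfig → Prop
  | done (C : SwitchConfig) (p : ℕ × ℕ) : ¬ NuAdj C p → EvacOutConfig C p C
  | step (C C₁ C' : SwitchConfig) (p q : ℕ × ℕ) :
      SwitchAt C p q C₁ → EvacOutConfig C₁ q C' → EvacOutConfig C p C'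

/-- Complete inward (upper) evacuation of the ν-box at `p` through the μ-content. -/
inductive EvacInConfig : SwitchConfig → ℕ × ℕ → SwitchConfig → Prop
  | done (C : SwitchConfig) (p : ℕ × ℕ) : ¬ MuAdj C p → EvacInConfig C p C
  | step (C C₁ C' : SwitchConfig) (p q : ℕ × ℕ) :
      SwitchAtIn C p q C₁ → EvacInConfig C₁ q C' → EvacInConfig C p C'

/-- Final configuration: no μ-box has ν-content immediately to its right or below,
i.e. the ν-content is partition-shaped with the μ-content in a skew shape below it. -/
def FinalConfig (C : SwitchConfig) : Prop :=
  ∀ p q : ℕ × ℕ, (q = (p.1, p.2 + 1) ∨ q = (p.1 + 1, p.2)) →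
    ¬((∃ v, C p.1 p.2 = some (false, v)) ∧ ∃ w, C q.1 q.2 = some (true, w))

/-- The Push Down algorithm. -/
inductive PushDown : SwitchConfig → SwitchConfig → Prop
  | done (C : SwitchConfig) : FinalConfig C → PushDown C C
  | step (C C₁ C' : SwitchConfig) (p : ℕ × ℕ) :
      MuChoice C p → EvacOutConfig C p C₁ → PushDown C₁ C' → PushDown C C'

/-- The Push Up algorithm. -/
inductive PushUp : SwitchConfig → SwitchConfig → Prop
  | done (C : SwitchConfig) : FinalConfig C → PushUp C C
  | step (C C₁ C' : SwitchConfig) (p : ℕ × ℕ) :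
      NuChoice C p → EvacInConfig C p C₁ → PushUp C₁ C' → PushUp C C'

/-! `Pf` places the letters by patience sorting for weakly decreasing subwords. After a prefix
`w` of the word has been placed, the first free column `pfCol placed r` of rows `r` and below is
the length of the longest weakly decreasing subword of `w` with all letters `> r`: such a subword
of `w ++ [a]` either avoids the last letter, or is `a` appended to one with letters `≥ a`, which
matches the update `max (pfCol placed r) (pfCol placed (a - 1) + 1)` for `r ≤ a - 1` made by
placing `a` in row `a - 1`. For `r = 0` this is the number of columns. -/

lemma foldr_max_append (l₁ l₂ : List ℕ) :
    (l₁ ++ l₂).foldr max 0 = max (l₁.foldr max 0) (l₂.foldr max 0) := by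
  induction l₁ with
  | nil => simp
  | cons x t ih => simp [ih, max_assoc]

lemma isChain_ge_append_singleton_iff {l : List ℕ} {a : ℕ} :
    (l ++ [a]).IsChain (fun x y => y ≤ x) ↔ l.IsChain (fun x y => y ≤ x) ∧ ∀ x ∈ l, a ≤ x := by
  simp [List.isChain_iff_pairwise, List.pairwise_append]

lemma sublist_append_singleton_iff {l w : List ℕ} {a : ℕ} :
    l.Sublist (w ++ [a]) ↔ l.Sublist w ∨ ∃ l', l'.Sublist w ∧ l = l' ++ [a] := by
  simp only [List.sublist_append_iff, List.sublist_singleton]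
  constructor
  · rintro ⟨l₁, l₂, rfl, h₁, rfl | rfl⟩
    · exact .inl (by simpa using h₁)
    · exact .inr ⟨l₁, h₁, rfl⟩
  · rintro (h | ⟨l', h, rfl⟩)
    · exact ⟨l, [], by simp, h, .inl rfl⟩
    · exact ⟨l', [a], rfl, h, .inr rfl⟩

def decSubwordLengths (w : List ℕ) (r : ℕ) : Set ℕ :=
  {m | ∃ l : List ℕ, l.Sublist w ∧ l.IsChain (fun x y => y ≤ x) ∧ (∀ x ∈ l, r < x) ∧
    l.length = m}

lemma decSubwordLengths_nil (r : ℕ) : decSubwordLengths [] r = {0} := by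
  ext m
  simp [decSubwordLengths]

lemma mem_decSubwordLengths_append_singleton {w : List ℕ} {a r m : ℕ} :
    m ∈ decSubwordLengths (w ++ [a]) r ↔
      m ∈ decSubwordLengths w r ∨ r < a ∧ ∃ k ∈ decSubwordLengths w (a - 1), k + 1 = m := by
  simp only [decSubwordLengths, Set.mem_ofPred_eq, sublist_append_singleton_iff]
  constructor
  · rintro ⟨l, hl | ⟨l', hl', rfl⟩, hchain, hr, rfl⟩
    · exact .inl ⟨l, hl, hchain, hr, rfl⟩
    · rw [isChain_ge_append_singleton_iff] at hchain
      have hra : r < a := hr a (by simp)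
      refine .inr ⟨hra, l'.length, ⟨l', hl', hchain.1, fun x hx => ?_, rfl⟩, by simp⟩
      have := hchain.2 x hx
      omega
  · rintro (⟨l, hl, hchain, hr, rfl⟩ | ⟨hra, _, ⟨l', hl', hchain, ha, rfl⟩, rfl⟩)
    · exact ⟨l, .inl hl, hchain, hr, rfl⟩
    · refine ⟨l' ++ [a], .inr ⟨l', hl', rfl⟩, ?_, ?_, by simp⟩
      · exact isChain_ge_append_singleton_iff.2 ⟨hchain, fun x hx => by have := ha x hx; omega⟩
      · intro x hx
        rcases List.mem_append.1 hx with hx | hx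
        · have := ha x hx; omega
        · rwa [List.mem_singleton.1 hx]

lemma pfCol_append (p q : List (ℕ × ℕ × ℕ)) (r : ℕ) :
    pfCol (p ++ q) r = max (pfCol p r) (pfCol q r) := by
  rw [pfCol, List.filterMap_append, foldr_max_append]; rfl

lemma pfCol_singleton (b : ℕ × ℕ × ℕ) (r : ℕ) :
    pfCol [b] r = if r ≤ b.1 then b.2.1 + 1 else 0 := by
  split_ifs with h <;> simp [pfCol, h]

lemma pfCol_zero (p : List (ℕ × ℕ × ℕ)) : pfCol p 0 = (p.map fun b => b.2.1 + 1).foldr max 0 := by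
  simp [pfCol]

lemma isGreatest_pfCol_append {w : List ℕ} {placed : List (ℕ × ℕ × ℕ)}
    (h : ∀ r, IsGreatest (decSubwordLengths w r) (pfCol placed r)) {a : ℕ} (ha : 1 ≤ a)
    (s r : ℕ) :
    IsGreatest (decSubwordLengths (w ++ [a]) r)
      (pfCol (placed ++ [(a - 1, pfCol placed (a - 1), s)]) r) := by
  rw [pfCol_append, pfCol_singleton]
  by_cases hra : r < a
  · have hsplit : decSubwordLengths (w ++ [a]) r =
        decSubwordLengths w r ∪ (· + 1) '' decSubwordLengths w (a - 1) := by
      ext m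
      simp [mem_decSubwordLengths_append_singleton, hra]
    rw [hsplit, if_pos (by omega)]
    exact (h r).union (Monotone.map_isGreatest (fun _ _ => Nat.succ_le_succ) (h (a - 1)))
  · have hsame : decSubwordLengths (w ++ [a]) r = decSubwordLengths w r := by
      ext m
      simp [mem_decSubwordLengths_append_singleton, hra]
    rw [hsame, if_neg (by omega), Nat.max_zero]
    exact h r

lemma isGreatest_pfCol_pfBoxes (L : List (ℕ × ℕ)) (hL : ∀ sa ∈ L, 1 ≤ sa.2) (w : List ℕ)
    (placed : List (ℕ × ℕ × ℕ)) (h : ∀ r, IsGreatest (decSubwordLengths w r) (pfCol placed r))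
    (r : ℕ) :
    IsGreatest (decSubwordLengths (w ++ L.map Prod.snd) r) (pfCol (pfBoxes L placed) r) := by
  induction L generalizing w placed with
  | nil => simpa [pfBoxes] using h r
  | cons sa rest ih =>
    have step := isGreatest_pfCol_append h (hL sa (by simp)) sa.1
    simpa only [pfBoxes, List.map_cons, List.append_assoc, List.singleton_append] using
      ih (fun sa' hsa' => hL sa' (by simp [hsa'])) (w ++ [sa.2]) _ step

lemma indexedLetters_map_snd (P : List (List ℕ)) (s : ℕ) :
    (indexedLetters P s).map Prod.snd = flatP P := by
  induction P generalizing s with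
  | nil => rfl
  | cons h t ih => simp [indexedLetters, flatP, ih]

lemma mem_flatP {P : List (List ℕ)} {a : ℕ} : a ∈ flatP P ↔ ∃ h ∈ P, a ∈ h := by
  induction P with
  | nil => simp [flatP]
  | cons h t ih => simp [flatP, ih]

lemma decSubwordLengths_zero_of_pos {w : List ℕ} (hw : ∀ a ∈ w, 0 < a) :
    decSubwordLengths w 0 =
      {m | ∃ l : List ℕ, l.Sublist w ∧ l.IsChain (fun x y => y ≤ x) ∧ l.length = m} := by
  ext m
  simp only [decSubwordLengths, Set.mem_ofPred_eq]
  exact exists_congr fun l => ⟨fun ⟨hl, hc, _, hm⟩ => ⟨hl, hc, hm⟩,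
    fun ⟨hl, hc, hm⟩ => ⟨hl, hc, fun x hx => hw x (hl.subset hx), hm⟩⟩

theorem cols_eq_longest_weakly_decreasing_subword_general (n : ℕ) (P : List (List ℕ))
    (hP : IsParsedWord n P) :
    IsGreatest {m : ℕ | ∃ l : List ℕ, l.Sublist (flatP P) ∧
      List.Chain' (fun a b => b ≤ a) l ∧ l.length = m} (Pf P n).cols := by
  have hletters := indexedLetters_map_snd P 1
  have hpos : ∀ a ∈ flatP P, 0 < a := fun a ha => by
    obtain ⟨h, hh, hah⟩ := mem_flatP.1 ha
    exact (hP.2 h hh a hah).1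
  have key := isGreatest_pfCol_pfBoxes (indexedLetters P 1)
    (fun sa hsa => hpos sa.2 (hletters ▸ List.mem_map_of_mem hsa)) [] []
    (fun r => by simp [decSubwordLengths_nil, pfCol]) 0
  rwa [List.nil_append, hletters, decSubwordLengths_zero_of_pos hpos, pfCol_zero] at key

/-- If `T = Pf(ω_𝒫)` for a parsed word `ω_𝒫`, the number of columns
of the left-justified representative `*T` (which is the output of `Pf`) is the
greatest length of a weakly decreasing subword (subsequence) of `ω`. -/
theorem cols_eq_longest_weakly_decreasing_subword (n : ℕ) (P : List (List ℕ))
    (hP : IsParsedWord n P) (hne : flatP P ≠ []) :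
    IsGreatest {m : ℕ | ∃ l : List ℕ, l.Sublist (flatP P) ∧
      List.Chain' (fun a b => b ≤ a) l ∧ l.length = m} (Pf P n).cols :=
  cols_eq_longest_weakly_decreasing_subword_general n P hP

end PerfTab
end

section
/- The rotation map Rot satisfies: for any ptableau T ∈ PTab_{(ℓ,n)}, *Rot(T) = Rot(T*) and Rot(*T) = Rot(T)*; Rot is an involution (on ptableaux and on words); and Pf(Rot(ω)) = Rot(Pf(ω)) for every word ω ∈ [n]^{⊗k} (with its parsing reversed accordingly). -/
namespace PerfTab

/-!
Rotation reverses the order of the rows and the order of the cells within each row, so it maps swap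
steps to swap steps; being an involution, it exchanges the left- and right-justified
representatives of a row-equivalence class.

For `Pf`, the tableaux `Pf (Rot ω)` and `Rot (Pf ω)` consist of the same boxes: the `k`-th letter of
`ω` gives a box in row `n - 1 - ρ k` with value `ℓ + 1 - s k`. They differ only in the columns,
`C - 1 - γ k` in `Rot (Pf ω)`, where `γ` is the greedy placement of `ω`, and `α k`, the greedy
placement of the reversed word, in `Pf (Rot ω)`. The two greedy placements are complementary
(`α ≤ C - 1 - γ`, with equality for some box in every column), and they order alike every pair of
boxes constrained by the ptableau conditions. Hence every placement in between is a ptableau, and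
one placement is reached from the other by sliding boxes one cell at a time.
-/

theorem Tab.ext {T T' : Tab} (he : T.entry = T'.entry) (hr : T.rows = T'.rows)
    (hc : T.cols = T'.cols) : T = T' := by
  cases T; cases T'; simp_all

def EntriesIn (l : ℕ) (T : Tab) : Prop := ∀ r j v, T.entry r j = some v → 1 ≤ v ∧ v ≤ l

lemma IsPTab.lt_of_isSome {T : Tab} (pt : IsPTab T) {r j : ℕ} (h : (T.entry r j).isSome) :
    r < T.rows ∧ j < T.cols := by
  by_contra hlt
  rcases not_and_or.1 hlt with hr | hc
  · simp [pt.row_bound r j (not_lt.1 hr)] at h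
  · simp [pt.col_bound r j (not_lt.1 hc)] at h

section SwapSteps

variable {l : ℕ} {X Y : Tab}

lemma entriesIn_of_swapStep (h : SwapStep X Y) (hb : EntriesIn l X) : EntriesIn l Y := by
  obtain ⟨_, _, _, _, r, j, _, h₁, h₂, hrest⟩ := h
  intro r' j' v hv
  by_cases hc : r' = r ∧ (j' = j ∨ j' = j + 1)
  · obtain ⟨rfl, rfl | rfl⟩ := hc
    · exact hb _ _ _ (h₁ ▸ hv)
    · exact hb _ _ _ (h₂ ▸ hv)
  · exact hb _ _ _ (hrest _ _ hc ▸ hv)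

lemma SwapStep.symm (h : SwapStep X Y) : SwapStep Y X := by
  obtain ⟨ptX, ptY, hr, hc, r, j, hswap, h₁, h₂, hrest⟩ := h
  refine ⟨ptY, ptX, hr.symm, hc.symm, r, j, ?_, h₂.symm, h₁.symm,
    fun r' j' hne => (hrest r' j' hne).symm⟩
  rw [h₁, h₂]
  exact hswap.symm.imp And.symm And.symm

instance : Std.Symm SwapStep := ⟨fun _ _ => SwapStep.symm⟩

lemma entriesIn_of_reflTransGen (h : Relation.ReflTransGen SwapStep X Y) (hb : EntriesIn l X) :
    EntriesIn l Y := by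
  induction h with
  | refl => exact hb
  | tail _ hstep ih => exact entriesIn_of_swapStep hstep ih

lemma dims_eq_of_reflTransGen (h : Relation.ReflTransGen SwapStep X Y) :
    X.rows = Y.rows ∧ X.cols = Y.cols := by
  induction h with
  | refl => exact ⟨rfl, rfl⟩
  | tail _ hstep ih => exact ⟨ih.1.trans hstep.2.2.1, ih.2.trans hstep.2.2.2.1⟩

end SwapSteps

section Rotation

variable {l : ℕ} {T : Tab}

@[simp] lemma rotTab_rows (l : ℕ) (T : Tab) : (rotTab l T).rows = T.rows := rfl

@[simp] lemma rotTab_cols (l : ℕ) (T : Tab) : (rotTab l T).cols = T.cols := rfl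

lemma rotTab_entry_of_lt {r j : ℕ} (h : r < T.rows ∧ j < T.cols) :
    (rotTab l T).entry r j = (T.entry (T.rows - 1 - r) (T.cols - 1 - j)).map (l + 1 - ·) :=
  if_pos h

lemma rotTab_entry_of_not_lt {r j : ℕ} (h : ¬(r < T.rows ∧ j < T.cols)) :
    (rotTab l T).entry r j = none :=
  if_neg h

lemma rotTab_entry_rev {r j : ℕ} (hr : r < T.rows) (hj : j < T.cols) :
    (rotTab l T).entry (T.rows - 1 - r) (T.cols - 1 - j) = (T.entry r j).map (l + 1 - ·) := by
  rw [rotTab_entry_of_lt (by omega), Nat.sub_sub_self (by omega), Nat.sub_sub_self (by omega)]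

lemma rotTab_entry_eq_some {r j v : ℕ} (h : (rotTab l T).entry r j = some v) :
    r < T.rows ∧ j < T.cols ∧
      ∃ w, T.entry (T.rows - 1 - r) (T.cols - 1 - j) = some w ∧ v = l + 1 - w := by
  by_cases hin : r < T.rows ∧ j < T.cols
  · rw [rotTab_entry_of_lt hin, Option.map_eq_some_iff] at h
    obtain ⟨w, hw, rfl⟩ := h
    exact ⟨hin.1, hin.2, w, hw, rfl⟩
  · simp [rotTab_entry_of_not_lt hin] at h

lemma entriesIn_rotTab (hb : EntriesIn l T) : EntriesIn l (rotTab l T) := by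
  intro r j v hv
  obtain ⟨-, -, w, hw, rfl⟩ := rotTab_entry_eq_some hv
  have := hb _ _ _ hw
  omega

lemma rotTab_rotTab (pt : IsPTab T) (hb : EntriesIn l T) : rotTab l (rotTab l T) = T := by
  refine Tab.ext ?_ rfl rfl
  funext r j
  by_cases hin : r < T.rows ∧ j < T.cols
  · rw [rotTab_entry_of_lt (T := rotTab l T) hin, rotTab_rows, rotTab_cols,
      rotTab_entry_rev hin.1 hin.2, Option.map_map]
    cases hv : T.entry r j with
    | none => rfl
    | some v =>
      have := hb _ _ _ hv
      simp only [Option.map_some, Function.comp_apply]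
      congr 1
      omega
  · rw [rotTab_entry_of_not_lt (T := rotTab l T) hin]
    rcases not_and_or.1 hin with hr | hc
    · exact (pt.row_bound r j (not_lt.1 hr)).symm
    · exact (pt.col_bound r j (not_lt.1 hc)).symm

lemma isPTab_rotTab (pt : IsPTab T) (hb : EntriesIn l T) : IsPTab (rotTab l T) where
  pos r j v hv := by
    obtain ⟨-, -, w, hw, rfl⟩ := rotTab_entry_eq_some hv
    have := hb _ _ _ hw
    omega
  row_bound r j hr := rotTab_entry_of_not_lt (by simp at hr; omega)
  col_bound r j hj := rotTab_entry_of_not_lt (by simp at hj; omega)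
  no_blank_col j hj := by
    rw [rotTab_cols] at hj
    obtain ⟨r, hr⟩ := pt.no_blank_col (T.cols - 1 - j) (by omega)
    refine ⟨T.rows - 1 - r, ?_⟩
    have hlt := pt.lt_of_isSome hr
    rw [← Nat.sub_sub_self (show j ≤ T.cols - 1 by omega), rotTab_entry_rev hlt.1 hlt.2]
    simpa using hr
  strip v r r' j j' h h' hrr := by
    obtain ⟨hr, hj, w, hw, rfl⟩ := rotTab_entry_eq_some h
    obtain ⟨hr', hj', w', hw', hv⟩ := rotTab_entry_eq_some h'
    have := hb _ _ _ hw
    have := hb _ _ _ hw'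
    obtain rfl : w = w' := by omega
    have := pt.strip w _ _ _ _ hw' hw (by omega)
    omega
  shadow v w r₁ j₁ r₂ j₂ h₁ h₂ hvw := by
    obtain ⟨hr₁, hj₁, v', hv', rfl⟩ := rotTab_entry_eq_some h₁
    obtain ⟨hr₂, hj₂, w', hw', rfl⟩ := rotTab_entry_eq_some h₂
    have := hb _ _ _ hv'
    have := hb _ _ _ hw'
    have := pt.shadow w' v' _ _ _ _ hw' hv' (by omega)
    omega

lemma swapStep_rotTab {X Y : Tab} (h : SwapStep X Y) (hb : EntriesIn l X) :
    SwapStep (rotTab l X) (rotTab l Y) := by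
  have hbY := entriesIn_of_swapStep h hb
  obtain ⟨ptX, ptY, hrows, hcols, r, j, hswap, h₁, h₂, hrest⟩ := h
  have hin : r < X.rows ∧ j + 1 < X.cols := by
    rcases hswap with ⟨-, hs⟩ | ⟨hs, -⟩
    · exact ptX.lt_of_isSome hs
    · have := ptY.lt_of_isSome (show (Y.entry r (j + 1)).isSome by rw [h₂]; exact hs)
      omega
  have rotX (k : ℕ) (hk : k < X.cols) := rotTab_entry_rev (l := l) hin.1 hk
  have rotY (k : ℕ) (hk : k < X.cols) :=
    hrows ▸ hcols ▸ rotTab_entry_rev (l := l) (T := Y) (hrows ▸ hin.1) (hcols ▸ hk)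
  have hj : X.cols - 1 - (j + 1) + 1 = X.cols - 1 - j := by omega
  refine ⟨isPTab_rotTab ptX hb, isPTab_rotTab ptY hbY, hrows, hcols,
    X.rows - 1 - r, X.cols - 1 - (j + 1), ?_, ?_, ?_, ?_⟩ <;>
    simp only [hj, rotX j (by omega), rotX (j + 1) hin.2, rotY j (by omega), rotY (j + 1) hin.2]
  · rcases hswap with ⟨hn, hs⟩ | ⟨hs, hn⟩
    · exact Or.inr ⟨by simpa using hs, by simp [hn]⟩
    · exact Or.inl ⟨by simp [hn], by simpa using hs⟩
  · rw [h₂]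
  · rw [h₁]
  · intro r' j' hne
    by_cases hin' : r' < X.rows ∧ j' < X.cols
    · rw [rotTab_entry_of_lt (hrows ▸ hcols ▸ hin'), rotTab_entry_of_lt hin', ← hrows, ← hcols,
        hrest _ _ (by omega)]
    · rw [rotTab_entry_of_not_lt (hrows ▸ hcols ▸ hin'), rotTab_entry_of_not_lt hin']

lemma reflTransGen_rotTab {X Y : Tab} (h : Relation.ReflTransGen SwapStep X Y)
    (hb : EntriesIn l X) : Relation.ReflTransGen SwapStep (rotTab l X) (rotTab l Y) := by
  induction h with
  | refl => exact .refl
  | tail hXY hstep ih => exact ih.tail (swapStep_rotTab hstep (entriesIn_of_reflTransGen hXY hb))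

lemma rowEquiv_rotTab {U : Tab} (h : RowEquiv T U) (hb : EntriesIn l T) :
    RowEquiv (rotTab l T) (rotTab l U) :=
  ⟨isPTab_rotTab h.1 hb, isPTab_rotTab h.2.1 (entriesIn_of_reflTransGen h.2.2 hb),
    reflTransGen_rotTab h.2.2 hb⟩

end Rotation

section Justified

variable {l : ℕ}

lemma filter_range_sub (C : ℕ) (p : ℕ → Bool) :
    (List.range C).filter (fun j => p (C - 1 - j))
      = (((List.range C).filter p).map (C - 1 - ·)).reverse := by
  have hrev : (List.range C).reverse = (List.range C).map (C - 1 - ·) := by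
    simpa [← List.range_eq_range'] using List.reverse_range' (s := 0) (n := C)
  have hinv : ∀ j ∈ (List.range C).filter (fun j => p (C - 1 - j)), C - 1 - (C - 1 - j) = j :=
    fun j hj => by have := List.mem_range.1 (List.mem_of_mem_filter hj); omega
  rw [← List.map_reverse, ← List.filter_reverse, hrev, List.filter_map, List.map_map]
  exact ((List.map_congr_left hinv).trans (List.map_id _)).symm

lemma filledCols_rotTab {T : Tab} {r : ℕ} (hr : r < T.rows) :
    filledCols (rotTab l T) r
      = ((filledCols T (T.rows - 1 - r)).map (T.cols - 1 - ·)).reverse := by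
  unfold filledCols
  rw [rotTab_cols, ← filter_range_sub]
  refine List.filter_congr fun j hj => ?_
  rw [rotTab_entry_of_lt ⟨hr, List.mem_range.1 hj⟩, Option.isSome_map]

lemma filledCols_rotTab_of_le {T : Tab} {r : ℕ} (hr : T.rows ≤ r) :
    filledCols (rotTab l T) r = [] := by
  simp only [filledCols, List.filter_eq_nil_iff]
  intro j _
  simp [rotTab_entry_of_not_lt (show ¬(r < T.rows ∧ j < T.cols) by omega)]

lemma forall₂_filledCols_rotTab {Rel Rel' : ℕ → ℕ → Prop} {T U : Tab}
    (hrows : T.rows = U.rows) (hcols : T.cols = U.cols)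
    (hRel : ∀ a b, Rel a b → Rel' (T.cols - 1 - a) (T.cols - 1 - b))
    (h : ∀ r, List.Forall₂ Rel (filledCols T r) (filledCols U r)) (r : ℕ) :
    List.Forall₂ Rel' (filledCols (rotTab l T) r) (filledCols (rotTab l U) r) := by
  by_cases hr : r < T.rows
  · rw [filledCols_rotTab hr, filledCols_rotTab (hrows ▸ hr), List.forall₂_reverse_iff,
      List.forall₂_map_left_iff, List.forall₂_map_right_iff, ← hrows, ← hcols]
    exact List.Forall₂.imp (fun a b => hRel a b) (h _)
  · rw [filledCols_rotTab_of_le (not_lt.1 hr), filledCols_rotTab_of_le (hrows ▸ not_lt.1 hr)]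
    exact .nil

lemma rowEquiv_rotTab_of_rowEquiv_rotTab {T U : Tab} (pt : IsPTab T) (hb : EntriesIn l T)
    (h : RowEquiv (rotTab l T) U) :
    RowEquiv T (rotTab l U) ∧ rotTab l (rotTab l U) = U := by
  have hbU := entriesIn_of_reflTransGen h.2.2 (entriesIn_rotTab hb)
  exact ⟨rotTab_rotTab pt hb ▸ rowEquiv_rotTab h (entriesIn_rotTab hb),
    rotTab_rotTab h.2.1 hbU⟩

lemma leftJustified_rotTab {R : Tab} (pt : IsPTab R) (hb : EntriesIn l R)
    (hR : RightJustified R) : LeftJustified (rotTab l R) := by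
  intro U hU
  obtain ⟨hRU, hUU⟩ := rowEquiv_rotTab_of_rowEquiv_rotTab pt hb hU
  have hdims := dims_eq_of_reflTransGen hRU.2.2
  rw [← hUU]
  exact forall₂_filledCols_rotTab hdims.1 hdims.2 (fun a b hab => by omega) (hR _ hRU)

lemma rightJustified_rotTab {L : Tab} (pt : IsPTab L) (hb : EntriesIn l L)
    (hL : LeftJustified L) : RightJustified (rotTab l L) := by
  intro U hU
  obtain ⟨hLU, hUU⟩ := rowEquiv_rotTab_of_rowEquiv_rotTab pt hb hU
  have hdims := dims_eq_of_reflTransGen hLU.2.2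
  rw [← hUU]
  exact forall₂_filledCols_rotTab hdims.1 hdims.2 (fun a b hab => by omega) (hL _ hLU)

end Justified

lemma rotWord_rotWord {n : ℕ} {w : List ℕ} (h : ∀ a ∈ w, 1 ≤ a ∧ a ≤ n) :
    rotWord n (rotWord n w) = w := by
  rw [rotWord, rotWord, List.map_reverse, List.reverse_reverse, List.map_map]
  refine (List.map_congr_left fun a ha => ?_).trans (List.map_id w)
  have := h a ha
  simp only [Function.comp_apply, id_eq]
  omega

lemma foldr_max_mem_of_pos {l : List ℕ} (h : 0 < l.foldr max 0) : l.foldr max 0 ∈ l := by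
  induction l with
  | nil => simp at h
  | cons a t ih =>
    rw [List.foldr_cons] at h ⊢
    rcases max_choice a (t.foldr max 0) with hmax | hmax <;> rw [hmax] at h ⊢
    · exact List.mem_cons_self
    · exact List.mem_cons_of_mem _ (ih h)

lemma findSome?_eq_some_of_unique {α β : Type*} {l : List α} {f : α → Option β} {x : α} {v : β}
    (hx : x ∈ l) (hfx : f x = some v) (huniq : ∀ y ∈ l, ∀ w, f y = some w → w = v) :
    l.findSome? f = some v := by
  have hsome : (l.findSome? f).isSome := List.findSome?_isSome_iff.2 ⟨x, hx, by rw [hfx]; rfl⟩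
  obtain ⟨w, hw⟩ := Option.isSome_iff_exists.1 hsome
  obtain ⟨y, hy, hfy⟩ := List.exists_of_findSome?_eq_some hw
  rw [hw, huniq y hy w hfy]

lemma findSome?_congr {α β : Type*} {l : List α} {f g : α → Option β}
    (h : ∀ a ∈ l, f a = g a) : l.findSome? f = l.findSome? g := by
  induction l with
  | nil => rfl
  | cons a t ih =>
    simp only [List.findSome?_cons, h a List.mem_cons_self,
      ih fun x hx => h x (List.mem_cons_of_mem _ hx)]

section Placement

lemma pfBoxes_append (L₁ L₂ : List (ℕ × ℕ)) (placed : List (ℕ × ℕ × ℕ)) :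
    pfBoxes (L₁ ++ L₂) placed = pfBoxes L₂ (pfBoxes L₁ placed) := by
  induction L₁ generalizing placed with
  | nil => rfl
  | cons sa rest ih => exact ih _

lemma pfBoxes_prefix (L : List (ℕ × ℕ)) (placed : List (ℕ × ℕ × ℕ)) :
    placed <+: pfBoxes L placed := by
  induction L generalizing placed with
  | nil => exact List.prefix_rfl
  | cons sa rest ih => exact (List.prefix_append placed _).trans (ih _)

lemma pfBoxes_length (L : List (ℕ × ℕ)) (placed : List (ℕ × ℕ × ℕ)) :
    (pfBoxes L placed).length = placed.length + L.length := by
  induction L generalizing placed with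
  | nil => simp [pfBoxes]
  | cons sa rest ih =>
    simp only [pfBoxes, ih, List.length_append, List.length_cons, List.length_nil]
    omega

variable (L : List (ℕ × ℕ))

def boxRow (k : ℕ) : ℕ := ((pfBoxes L []).getD k (0, 0, 0)).1

def boxCol (k : ℕ) : ℕ := ((pfBoxes L []).getD k (0, 0, 0)).2.1

def boxVal (k : ℕ) : ℕ := ((pfBoxes L []).getD k (0, 0, 0)).2.2

def pfCols : ℕ := ((pfBoxes L []).map fun b => b.2.1 + 1).foldr max 0

lemma pfBoxes_take_getD {i t : ℕ} (hi : i < t) (ht : t ≤ L.length) :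
    (pfBoxes (L.take t) []).getD i (0, 0, 0) = (pfBoxes L []).getD i (0, 0, 0) := by
  have hpre : pfBoxes (L.take t) [] <+: pfBoxes L [] := by
    conv_rhs => rw [← List.take_append_drop t L, pfBoxes_append]
    exact pfBoxes_prefix _ _
  have hlen : i < (pfBoxes (L.take t) []).length := by simp [pfBoxes_length]; omega
  rw [List.getD_eq_getElem _ _ hlen, List.getD_eq_getElem _ _ (hpre.length_le.trans_lt' hlen),
    hpre.getElem hlen]

lemma pfBoxes_getD {t : ℕ} (ht : t < L.length) :
    (pfBoxes L []).getD t (0, 0, 0)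
      = ((L.getD t (0, 0)).2 - 1, pfCol (pfBoxes (L.take t) []) ((L.getD t (0, 0)).2 - 1),
          (L.getD t (0, 0)).1) := by
  have hsplit : pfBoxes L [] = pfBoxes (L.drop (t + 1)) (pfBoxes (L.take t) [] ++
      [((L.getD t (0, 0)).2 - 1, pfCol (pfBoxes (L.take t) []) ((L.getD t (0, 0)).2 - 1),
        (L.getD t (0, 0)).1)]) := by
    conv_lhs => rw [← List.take_append_drop t L, pfBoxes_append,
      List.drop_eq_getElem_cons ht, ← List.getD_eq_getElem L (0, 0) ht]
    rfl
  have hlen : (pfBoxes (L.take t) []).length = t := by simp [pfBoxes_length]; omega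
  rw [hsplit, List.getD_eq_getElem _ _ (by simp [pfBoxes_length]; omega),
    ← (pfBoxes_prefix _ _).getElem (by simp [hlen])]
  simp [List.getElem_append_right, hlen]

variable {L}

lemma boxRow_eq {t : ℕ} (ht : t < L.length) : boxRow L t = (L.getD t (0, 0)).2 - 1 := by
  rw [boxRow, pfBoxes_getD L ht]

lemma boxVal_eq {t : ℕ} (ht : t < L.length) : boxVal L t = (L.getD t (0, 0)).1 := by
  rw [boxVal, pfBoxes_getD L ht]

lemma boxCol_eq {t : ℕ} (ht : t < L.length) :
    boxCol L t = pfCol (pfBoxes (L.take t) []) (boxRow L t) := by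
  rw [boxCol, pfBoxes_getD L ht, boxRow_eq ht]

lemma pfBoxes_getD_mem {k : ℕ} (hk : k < L.length) :
    (pfBoxes L []).getD k (0, 0, 0) ∈ pfBoxes L [] := by
  rw [List.getD_eq_getElem _ _ (by simp [pfBoxes_length]; omega)]
  exact List.getElem_mem _

lemma boxCol_lt_boxCol {i j : ℕ} (hij : i < j) (hj : j < L.length)
    (hrow : boxRow L j ≤ boxRow L i) : boxCol L i < boxCol L j := by
  have hmem : (pfBoxes L []).getD i (0, 0, 0) ∈ pfBoxes (L.take j) [] := by
    rw [← pfBoxes_take_getD L hij hj.le]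
    exact pfBoxes_getD_mem (by simp; omega)
  rw [boxCol_eq hj, Nat.lt_iff_add_one_le, pfCol]
  exact List.le_max_of_le' 0 (List.mem_filterMap.2 ⟨_, hmem, if_pos hrow⟩) le_rfl

lemma boxCol_lt_pfCols {k : ℕ} (hk : k < L.length) : boxCol L k < pfCols L := by
  rw [Nat.lt_iff_add_one_le, pfCols]
  exact List.le_max_of_le' 0 (List.mem_map.2 ⟨_, pfBoxes_getD_mem hk, rfl⟩) le_rfl

lemma exists_getD_eq_of_mem_pfBoxes {b : ℕ × ℕ × ℕ} (hb : b ∈ pfBoxes L []) :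
    ∃ k < L.length, (pfBoxes L []).getD k (0, 0, 0) = b := by
  obtain ⟨k, hk, rfl⟩ := List.mem_iff_getElem.1 hb
  refine ⟨k, by simpa [pfBoxes_length] using hk, List.getD_eq_getElem _ _ hk⟩

lemma exists_boxCol_succ_eq {t : ℕ} (ht : t < L.length) (h : 0 < boxCol L t) :
    ∃ i < t, boxRow L t ≤ boxRow L i ∧ boxCol L i + 1 = boxCol L t := by
  rw [boxCol_eq ht, pfCol] at h ⊢
  obtain ⟨b, hb, hif⟩ := List.mem_filterMap.1 (foldr_max_mem_of_pos h)
  obtain ⟨i, hi, rfl⟩ := exists_getD_eq_of_mem_pfBoxes hb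
  simp only [List.length_take, lt_min_iff] at hi
  rw [pfBoxes_take_getD L hi.1 ht.le] at hif
  split_ifs at hif with hrow
  exact ⟨i, hi.1, hrow, Option.some_injective _ hif⟩

lemma exists_boxCol_succ_eq_pfCols (hL : 0 < L.length) :
    ∃ k < L.length, boxCol L k + 1 = pfCols L := by
  have hpos : 0 < pfCols L := (Nat.zero_le _).trans_lt (boxCol_lt_pfCols hL)
  obtain ⟨b, hb, hcol⟩ := List.mem_map.1 (foldr_max_mem_of_pos hpos)
  obtain ⟨k, hk, rfl⟩ := exists_getD_eq_of_mem_pfBoxes hb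
  exact ⟨k, hk, hcol⟩

lemma boxRow_boxCol_injective :
    ∀ i < L.length, ∀ k < L.length, boxRow L i = boxRow L k → boxCol L i = boxCol L k → i = k := by
  intro i hi k hk hrow hcol
  by_contra hne
  rcases Nat.lt_or_gt_of_ne hne with hik | hki
  · exact (boxCol_lt_boxCol hik hk hrow.ge).ne hcol
  · exact (boxCol_lt_boxCol hki hi hrow.le).ne' hcol

end Placement

def boxTab (n C m : ℕ) (row col val : ℕ → ℕ) : Tab where
  entry r c :=
    (List.range m).findSome? fun k => if row k = r ∧ col k = c then some (val k) else none
  rows := n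
  cols := C

def pfTab (L : List (ℕ × ℕ)) (n : ℕ) : Tab :=
  boxTab n (pfCols L) L.length (boxRow L) (boxCol L) (boxVal L)

lemma Pf_eq_pfTab (P : List (List ℕ)) (n : ℕ) : Pf P n = pfTab (indexedLetters P 1) n := by
  set L := indexedLetters P 1
  have hboxes : pfBoxes L [] = (List.range L.length).map ((pfBoxes L []).getD · (0, 0, 0)) := by
    refine List.ext_getElem (by simp [pfBoxes_length]) fun k h₁ h₂ => ?_
    rw [List.getElem_map, List.getElem_range, List.getD_eq_getElem _ _ h₁]
  refine Tab.ext ?_ rfl rfl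
  funext r c
  change (pfBoxes L []).findSome? _ = _
  rw [hboxes, List.findSome?_map]
  rfl

section BoxTab

variable {n C m : ℕ} {row col val : ℕ → ℕ}

lemma boxTab_entry_eq_some_iff (hinj : ∀ i < m, ∀ k < m, row i = row k → col i = col k → i = k)
    {r c v : ℕ} :
    (boxTab n C m row col val).entry r c = some v ↔ ∃ k < m, row k = r ∧ col k = c ∧ val k = v := by
  constructor
  · intro h
    obtain ⟨k, hk, hfk⟩ := List.exists_of_findSome?_eq_some h
    split_ifs at hfk with hrc
    exact ⟨k, List.mem_range.1 hk, hrc.1, hrc.2, Option.some_injective _ hfk⟩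
  · rintro ⟨k, hk, rfl, rfl, rfl⟩
    refine findSome?_eq_some_of_unique (List.mem_range.2 hk) (if_pos ⟨rfl, rfl⟩) fun i hi w hw => ?_
    split_ifs at hw with hrc
    rw [← Option.some_injective _ hw, hinj i (List.mem_range.1 hi) k hk hrc.1 hrc.2]

lemma boxTab_entry_eq_none_iff {r c : ℕ} :
    (boxTab n C m row col val).entry r c = none ↔ ∀ k < m, ¬(row k = r ∧ col k = c) := by
  simp [boxTab, List.findSome?_eq_none_iff]

lemma boxTab_congr {row' col' val' : ℕ → ℕ}
    (h : ∀ k < m, row k = row' k ∧ col k = col' k ∧ val k = val' k) :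
    boxTab n C m row col val = boxTab n C m row' col' val' := by
  refine Tab.ext ?_ rfl rfl
  funext r c
  refine findSome?_congr fun k hk => ?_
  obtain ⟨h₁, h₂, h₃⟩ := h k (List.mem_range.1 hk)
  simp only [h₁, h₂, h₃]

lemma boxTab_rev (hinj : ∀ i < m, ∀ k < m, row i = row k → col i = col k → i = k) :
    boxTab n C m row col val
      = boxTab n C m (fun k => row (m - 1 - k)) (fun k => col (m - 1 - k))
          (fun k => val (m - 1 - k)) := by
  have hinj' : ∀ i < m, ∀ k < m, row (m - 1 - i) = row (m - 1 - k) →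
      col (m - 1 - i) = col (m - 1 - k) → i = k := fun i hi k hk h₁ h₂ => by
    have := hinj _ (by omega) _ (by omega) h₁ h₂
    omega
  refine Tab.ext ?_ rfl rfl
  funext r c
  refine Option.ext fun v => ?_
  rw [boxTab_entry_eq_some_iff hinj, boxTab_entry_eq_some_iff hinj']
  constructor
  · rintro ⟨k, hk, h⟩
    exact ⟨m - 1 - k, by omega, by rwa [Nat.sub_sub_self (by omega)]⟩
  · rintro ⟨k, hk, h⟩
    exact ⟨m - 1 - k, by omega, h⟩

lemma rotTab_boxTab (l : ℕ) (hrow : ∀ k < m, row k < n) (hcol : ∀ k < m, col k < C) :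
    rotTab l (boxTab n C m row col val)
      = boxTab n C m (fun k => n - 1 - row k) (fun k => C - 1 - col k)
          (fun k => l + 1 - val k) := by
  refine Tab.ext ?_ rfl rfl
  funext r c
  by_cases hin : r < n ∧ c < C
  · rw [rotTab_entry_of_lt hin]
    dsimp only [boxTab]
    refine (List.map_findSome? ..).trans (findSome?_congr fun k hk => ?_)
    have := hrow k (List.mem_range.1 hk)
    have := hcol k (List.mem_range.1 hk)
    simp only [Function.comp_apply]
    split_ifs <;> first | rfl | omega
  · rw [rotTab_entry_of_not_lt hin]
    refine (boxTab_entry_eq_none_iff.2 fun k hk hrc => ?_).symm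
    have := hrow k hk
    have := hcol k hk
    omega

end BoxTab

/-- Two column placements `a ≤ b` of the same boxes (box `k` lies in row `row k` and has value
`val k`) that order alike every pair of boxes the ptableau conditions constrain, and such that every
column `c < C` holds a box placed at `c` by both. -/
structure CompatiblePlacements (n C m : ℕ) (row val a b : ℕ → ℕ) : Prop where
  same_row : ∀ i < m, ∀ j < m, i ≠ j → row i = row j →
    (a i < a j ∧ b i < b j) ∨ (a j < a i ∧ b j < b i)
  strip : ∀ i < m, ∀ j < m, val i = val j → row i < row j → a j < a i ∧ b j < b i
  shadow : ∀ i < m, ∀ j < m, val i < val j → row j ≤ row i → a i < a j ∧ b i < b j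
  le : ∀ k < m, a k ≤ b k
  cover : ∀ c < C, ∃ k < m, a k = c ∧ b k = c
  row_lt : ∀ k < m, row k < n
  col_lt : ∀ k < m, b k < C
  val_pos : ∀ k < m, 0 < val k

def Interpolates (m : ℕ) (a b x : ℕ → ℕ) : Prop :=
  (∀ k < m, a k ≤ x k ∧ x k ≤ b k) ∧ ∀ i < m, ∀ j < m, a i < a j → b i < b j → x i < x j

namespace CompatiblePlacements

variable {n C m : ℕ} {row val a b x : ℕ → ℕ}

lemma interpolates_left (hP : CompatiblePlacements n C m row val a b) : Interpolates m a b a :=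
  ⟨fun k hk => ⟨le_rfl, hP.le k hk⟩, fun _ _ _ _ h _ => h⟩

lemma interpolates_right (hP : CompatiblePlacements n C m row val a b) : Interpolates m a b b :=
  ⟨fun k hk => ⟨hP.le k hk, le_rfl⟩, fun _ _ _ _ _ h => h⟩

lemma injective_of_interpolates (hP : CompatiblePlacements n C m row val a b)
    (hx : Interpolates m a b x) :
    ∀ i < m, ∀ k < m, row i = row k → x i = x k → i = k := by
  intro i hi k hk hrow hcol
  by_contra hne
  rcases hP.same_row i hi k hk hne hrow with ⟨h₁, h₂⟩ | ⟨h₁, h₂⟩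
  · exact (hx.2 i hi k hk h₁ h₂).ne hcol
  · exact (hx.2 k hk i hi h₁ h₂).ne hcol.symm

lemma isPTab_boxTab (hP : CompatiblePlacements n C m row val a b) (hx : Interpolates m a b x) :
    IsPTab (boxTab n C m row x val) := by
  have hinj := hP.injective_of_interpolates hx
  refine ⟨?_, ?_, ?_, ?_, ?_, ?_⟩
  · rintro r c v hv
    obtain ⟨k, hk, -, -, rfl⟩ := (boxTab_entry_eq_some_iff hinj).1 hv
    exact hP.val_pos k hk
  · intro r c (hr : n ≤ r)
    refine boxTab_entry_eq_none_iff.2 fun k hk hrc => ?_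
    have := hP.row_lt k hk
    omega
  · intro r c (hc : C ≤ c)
    refine boxTab_entry_eq_none_iff.2 fun k hk hrc => ?_
    have := hP.col_lt k hk
    have := (hx.1 k hk).2
    omega
  · intro c hc
    obtain ⟨k, hk, hak, hbk⟩ := hP.cover c hc
    have := hx.1 k hk
    exact ⟨row k, by rw [(boxTab_entry_eq_some_iff hinj).2 ⟨k, hk, rfl, by omega, rfl⟩]; rfl⟩
  · intro v r r' c c' h h' hrr
    obtain ⟨k, hk, rfl, rfl, rfl⟩ := (boxTab_entry_eq_some_iff hinj).1 h
    obtain ⟨k', hk', rfl, rfl, hv⟩ := (boxTab_entry_eq_some_iff hinj).1 h'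
    have := hP.strip k hk k' hk' hv.symm hrr
    exact hx.2 k' hk' k hk this.1 this.2
  · intro v w r₁ c₁ r₂ c₂ h₁ h₂ hvw
    obtain ⟨k, hk, rfl, rfl, rfl⟩ := (boxTab_entry_eq_some_iff hinj).1 h₁
    obtain ⟨k', hk', rfl, rfl, rfl⟩ := (boxTab_entry_eq_some_iff hinj).1 h₂
    by_cases hrow : row k < row k'
    · exact Or.inl hrow
    · have := hP.shadow k hk k' hk' hvw (not_lt.1 hrow)
      exact Or.inr (hx.2 k hk k' hk' this.1 this.2)

lemma exists_interpolates_update (hP : CompatiblePlacements n C m row val a b)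
    (hx : Interpolates m a b x) (hne : ∃ k < m, x k ≠ a k) :
    ∃ i₀ < m, a i₀ < x i₀ ∧ Interpolates m a b (Function.update x i₀ (x i₀ - 1)) ∧
      ∀ k < m, row k = row i₀ → x k ≠ x i₀ - 1 := by
  classical
  have hS : ((Finset.range m).filter fun k => a k < x k).Nonempty := by
    obtain ⟨k, hk, hxk⟩ := hne
    exact ⟨k, by simpa using ⟨hk, lt_of_le_of_ne (hx.1 k hk).1 (Ne.symm hxk)⟩⟩
  obtain ⟨i₀, hi₀, hmin⟩ := Finset.exists_min_image _ a hS
  simp only [Finset.mem_filter, Finset.mem_range] at hi₀ hmin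
  -- boxes before `i₀` in the `a`-order are already in place, so none blocks `i₀`
  have hbelow : ∀ k < m, a k < a i₀ → x k = a k := fun k hk hak => by
    by_contra hxk
    have := hmin k ⟨hk, lt_of_le_of_ne (hx.1 k hk).1 (Ne.symm hxk)⟩
    omega
  refine ⟨i₀, hi₀.1, hi₀.2, ⟨fun k hk => ?_, fun i hi j hj hai hbi => ?_⟩, fun k hk hrow hxk => ?_⟩
  · have := hx.1 k hk
    rw [Function.update_apply]
    split_ifs with h <;> [subst h; skip] <;> omega
  · have hxij := hx.2 i hi j hj hai hbi
    simp only [Function.update_apply]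
    split_ifs with hi₀' hj₀ hj₀
    · subst hi₀' hj₀
      omega
    · subst hi₀'
      omega
    · subst hj₀
      have := hbelow i hi hai
      omega
    · exact hxij
  · have hki : k ≠ i₀ := by rintro rfl; omega
    rcases hP.same_row k hk i₀ hi₀.1 hki hrow with ⟨h₁, -⟩ | ⟨h₁, h₂⟩
    · have := hbelow k hk h₁
      omega
    · have := hx.2 i₀ hi₀.1 k hk h₁ h₂
      omega

lemma swapStep_boxTab_update (hP : CompatiblePlacements n C m row val a b) {i₀ : ℕ}
    (hi₀ : i₀ < m) (hpos : 0 < x i₀) (hx : Interpolates m a b x)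
    (hx' : Interpolates m a b (Function.update x i₀ (x i₀ - 1)))
    (hblank : ∀ k < m, row k = row i₀ → x k ≠ x i₀ - 1) :
    SwapStep (boxTab n C m row x val) (boxTab n C m row (Function.update x i₀ (x i₀ - 1)) val) := by
  have hinj := hP.injective_of_interpolates hx
  have hinj' := hP.injective_of_interpolates hx'
  have hsucc : x i₀ - 1 + 1 = x i₀ := by omega
  have hblank_x : (boxTab n C m row x val).entry (row i₀) (x i₀ - 1) = none :=
    boxTab_entry_eq_none_iff.2 fun k hk ⟨hrow, hcol⟩ => hblank k hk hrow hcol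
  have hblank_x' : (boxTab n C m row (Function.update x i₀ (x i₀ - 1)) val).entry (row i₀) (x i₀)
      = none := by
    refine boxTab_entry_eq_none_iff.2 fun k hk ⟨hrow, hcol⟩ => ?_
    rw [Function.update_apply] at hcol
    split_ifs at hcol with hki
    · omega
    · exact hki (hinj k hk i₀ hi₀ hrow hcol)
  have hbox_x : (boxTab n C m row x val).entry (row i₀) (x i₀) = some (val i₀) :=
    (boxTab_entry_eq_some_iff hinj).2 ⟨i₀, hi₀, rfl, rfl, rfl⟩
  refine ⟨hP.isPTab_boxTab hx, hP.isPTab_boxTab hx', rfl, rfl, row i₀, x i₀ - 1, ?_, ?_, ?_, ?_⟩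
  · rw [hsucc, hbox_x]
    exact Or.inl ⟨hblank_x, rfl⟩
  · rw [hsucc, hbox_x, boxTab_entry_eq_some_iff hinj']
    exact ⟨i₀, hi₀, rfl, by simp, rfl⟩
  · rw [hsucc, hblank_x', hblank_x]
  · intro r c hrc
    refine findSome?_congr fun k hk => ?_
    rw [Function.update_apply]
    split_ifs with hki hc₁ hc₂ hc₂ <;> first | rfl | (subst hki; omega)

lemma reflTransGen_boxTab (hP : CompatiblePlacements n C m row val a b)
    (hx : Interpolates m a b x) :
    Relation.ReflTransGen SwapStep (boxTab n C m row x val) (boxTab n C m row a val) := by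
  induction hN : ∑ k ∈ Finset.range m, (x k - a k) using Nat.strong_induction_on generalizing x
    with
  | _ N ih =>
    by_cases hne : ∃ k < m, x k ≠ a k
    · obtain ⟨i₀, hi₀, hlt, hx', hblank⟩ := hP.exists_interpolates_update hx hne
      have hdec : ∑ k ∈ Finset.range m, (Function.update x i₀ (x i₀ - 1) k - a k) < N := by
        rw [← hN]
        refine Finset.sum_lt_sum (fun k _ => ?_) ⟨i₀, Finset.mem_range.2 hi₀, ?_⟩
        · rw [Function.update_apply]
          split_ifs with h <;> [subst h; skip] <;> omega
        · simp only [Function.update_self]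
          omega
      exact .head (hP.swapStep_boxTab_update hi₀ (by omega) hx hx' hblank) (ih _ hdec hx' rfl)
    · push Not at hne
      rw [boxTab_congr fun k hk => ⟨rfl, hne k hk, rfl⟩]

theorem rowEquiv_boxTab (hP : CompatiblePlacements n C m row val a b) :
    RowEquiv (boxTab n C m row a val) (boxTab n C m row b val) := by
  refine ⟨hP.isPTab_boxTab hP.interpolates_left, hP.isPTab_boxTab hP.interpolates_right, ?_⟩
  exact Std.Symm.symm _ _ (hP.reflTransGen_boxTab hP.interpolates_right)

end CompatiblePlacements

def LettersSorted (L : List (ℕ × ℕ)) : Prop :=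
  L.Pairwise fun x y => x.1 < y.1 ∨ (x.1 = y.1 ∧ y.2 ≤ x.2)

def rotLetters (l n : ℕ) (L : List (ℕ × ℕ)) : List (ℕ × ℕ) :=
  (L.map fun x => (l + 1 - x.1, n + 1 - x.2)).reverse

section IndexedLetters

lemma indexedLetters_append (P₁ P₂ : List (List ℕ)) (s : ℕ) :
    indexedLetters (P₁ ++ P₂) s = indexedLetters P₁ s ++ indexedLetters P₂ (s + P₁.length) := by
  induction P₁ generalizing s with
  | nil => simp [indexedLetters]
  | cons h t ih =>
    simp only [List.cons_append, indexedLetters, ih, List.append_assoc, List.length_cons]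
    rw [Nat.add_right_comm, Nat.add_assoc]

lemma indexedLetters_succ (P : List (List ℕ)) (s : ℕ) :
    indexedLetters P (s + 1) = (indexedLetters P s).map fun x => (x.1 + 1, x.2) := by
  induction P generalizing s with
  | nil => rfl
  | cons h t ih =>
    simp only [indexedLetters, List.map_append, List.map_map, ih (s + 1)]
    rfl

lemma indexedLetters_rotParse (n : ℕ) (P : List (List ℕ)) :
    indexedLetters (rotParse n P) 1 = rotLetters P.length n (indexedLetters P 1) := by
  suffices h : ∀ s, indexedLetters ((P.map (rotWord n)).reverse) s
      = ((indexedLetters P 1).map fun x => (s + P.length - x.1, n + 1 - x.2)).reverse by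
    rw [rotParse, h 1, Nat.add_comm]
    rfl
  induction P with
  | nil => intro s; rfl
  | cons h t ih =>
    intro s
    simp only [List.map_cons, List.reverse_cons, indexedLetters_append, ih, List.length_reverse,
      List.length_map, indexedLetters, indexedLetters_succ, List.map_append, List.map_map,
      List.reverse_append, List.append_nil, rotWord, List.map_reverse]
    congr 2
    refine List.map_congr_left fun x _ => ?_
    simp only [Function.comp_apply, List.length_cons, Prod.mk.injEq, and_true]
    omega

lemma mem_indexedLetters {P : List (List ℕ)} {s : ℕ} {x : ℕ × ℕ}
    (hx : x ∈ indexedLetters P s) : s ≤ x.1 ∧ x.1 < s + P.length ∧ ∃ h ∈ P, x.2 ∈ h := by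
  induction P generalizing s with
  | nil => simp [indexedLetters] at hx
  | cons h t ih =>
    simp only [indexedLetters, List.mem_append, List.mem_map] at hx
    rcases hx with ⟨a, ha, rfl⟩ | hx
    · exact ⟨le_rfl, by simp, h, List.mem_cons_self, ha⟩
    · obtain ⟨h₁, h₂, g, hg, hag⟩ := ih hx
      exact ⟨by omega, by simp; omega, g, List.mem_cons_of_mem _ hg, hag⟩

lemma lettersSorted_indexedLetters {P : List (List ℕ)}
    (hP : ∀ h ∈ P, List.IsChain (fun a b => b ≤ a) h) (s : ℕ) :
    LettersSorted (indexedLetters P s) := by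
  induction P generalizing s with
  | nil => exact .nil
  | cons h t ih =>
    refine List.pairwise_append.2 ⟨?_, ih (fun g hg => hP g (List.mem_cons_of_mem _ hg)) _, ?_⟩
    · rw [List.pairwise_map]
      exact (List.isChain_iff_pairwise.1 (hP h List.mem_cons_self)).imp fun hab => .inr ⟨rfl, hab⟩
    · rintro _ hx y hy
      obtain ⟨a, -, rfl⟩ := List.mem_map.1 hx
      exact .inl (mem_indexedLetters hy).1

end IndexedLetters

/-- Box `k` is placed greedily in column `γ k` scanning the boxes left to right, and in column `α k`
scanning them right to left; a box constrains the column of a later box in a weakly higher row.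
Following the boxes that witness `α` resp. `γ` shows that the two placements are complementary. -/
theorem greedy_columns_complement {m C : ℕ} {ρ γ α : ℕ → ℕ}
    (hγ : ∀ i j, i < j → j < m → ρ j ≤ ρ i → γ i < γ j)
    (hα : ∀ i j, i < j → j < m → ρ j ≤ ρ i → α j < α i)
    (hγ_succ : ∀ k < m, 0 < γ k → ∃ i < k, ρ k ≤ ρ i ∧ γ i + 1 = γ k)
    (hα_succ : ∀ k < m, 0 < α k → ∃ j, k < j ∧ j < m ∧ ρ j ≤ ρ k ∧ α j + 1 = α k)
    (hγ_lt : ∀ k < m, γ k < C) (hC : 0 < C → ∃ k < m, γ k + 1 = C) :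
    (∀ k < m, α k + γ k + 1 ≤ C) ∧ ∀ c < C, ∃ k < m, α k = c ∧ γ k = C - 1 - c := by
  have hsum : ∀ N, ∀ k < m, α k ≤ N → α k + γ k + 1 ≤ C := by
    intro N
    induction N with
    | zero => intro k hk _; have := hγ_lt k hk; omega
    | succ N ih =>
      intro k hk hN
      rcases Nat.eq_zero_or_pos (α k) with h0 | hpos
      · have := hγ_lt k hk; omega
      obtain ⟨j, hkj, hj, hρ, hαj⟩ := hα_succ k hk hpos
      have := ih j hj (by omega)
      have := hγ k j hkj hj hρ
      omega
  refine ⟨fun k hk => hsum _ k hk le_rfl, fun c => ?_⟩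
  induction c with
  | zero =>
    intro hpos
    obtain ⟨k, hk, hγk⟩ := hC hpos
    have := hsum _ k hk le_rfl
    exact ⟨k, hk, by omega, by omega⟩
  | succ c ih =>
    intro hc
    obtain ⟨k, hk, hαk, hγk⟩ := ih (by omega)
    obtain ⟨i, hik, hρ, hγi⟩ := hγ_succ k hk (by omega)
    have := hα i k hik hk hρ
    have := hsum _ i (by omega) le_rfl
    exact ⟨i, by omega, by omega, by omega⟩

def LettersIn (l n : ℕ) (L : List (ℕ × ℕ)) : Prop :=
  ∀ x ∈ L, (1 ≤ x.1 ∧ x.1 ≤ l) ∧ 1 ≤ x.2 ∧ x.2 ≤ n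

section RotLetters

variable {l n : ℕ} {L : List (ℕ × ℕ)}

@[simp] lemma length_rotLetters : (rotLetters l n L).length = L.length := by simp [rotLetters]

lemma getD_rotLetters {k : ℕ} (hk : k < L.length) :
    (rotLetters l n L).getD (L.length - 1 - k) (0, 0)
      = (l + 1 - (L.getD k (0, 0)).1, n + 1 - (L.getD k (0, 0)).2) := by
  rw [List.getD_eq_getElem _ _ (by simp; omega), List.getD_eq_getElem _ _ hk]
  simp only [rotLetters, List.getElem_reverse, List.getElem_map, List.length_map,
    show L.length - 1 - (L.length - 1 - k) = k by omega]

lemma LettersIn.getD (hL : LettersIn l n L) {k : ℕ} (hk : k < L.length) :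
    (1 ≤ (L.getD k (0, 0)).1 ∧ (L.getD k (0, 0)).1 ≤ l) ∧
      1 ≤ (L.getD k (0, 0)).2 ∧ (L.getD k (0, 0)).2 ≤ n :=
  hL _ (List.getD_eq_getElem L _ hk ▸ List.getElem_mem hk)

lemma LettersIn.boxRow_lt (hL : LettersIn l n L) {k : ℕ} (hk : k < L.length) :
    boxRow L k < n := by
  have := hL.getD hk
  rw [boxRow_eq hk]
  omega

lemma LettersIn.boxVal_mem (hL : LettersIn l n L) {k : ℕ} (hk : k < L.length) :
    1 ≤ boxVal L k ∧ boxVal L k ≤ l := by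
  rw [boxVal_eq hk]
  exact (hL.getD hk).1

lemma LettersIn.boxRow_rotLetters (hL : LettersIn l n L) {k : ℕ} (hk : k < L.length) :
    boxRow (rotLetters l n L) (L.length - 1 - k) = n - 1 - boxRow L k := by
  have := hL.getD hk
  rw [boxRow_eq (by simp; omega), getD_rotLetters hk, boxRow_eq hk]
  omega

lemma boxVal_rotLetters {k : ℕ} (hk : k < L.length) :
    boxVal (rotLetters l n L) (L.length - 1 - k) = l + 1 - boxVal L k := by
  rw [boxVal_eq (by simp; omega), getD_rotLetters hk, boxVal_eq hk]

lemma LettersSorted.boxVal_lt_or (hsorted : LettersSorted L) {i j : ℕ} (hij : i < j)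
    (hj : j < L.length) :
    boxVal L i < boxVal L j ∨ (boxVal L i = boxVal L j ∧ boxRow L j ≤ boxRow L i) := by
  have hord := List.pairwise_iff_getElem.1 hsorted i j (by omega) hj hij
  rw [boxVal_eq (t := i) (by omega), boxVal_eq hj, boxRow_eq (t := i) (by omega), boxRow_eq hj,
    List.getD_eq_getElem _ _ (show i < L.length by omega), List.getD_eq_getElem _ _ hj]
  omega

lemma LettersIn.boxCol_rotLetters_lt (hL : LettersIn l n L) {i j : ℕ} (hij : i < j)
    (hj : j < L.length) (hρ : boxRow L j ≤ boxRow L i) :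
    boxCol (rotLetters l n L) (L.length - 1 - j)
      < boxCol (rotLetters l n L) (L.length - 1 - i) := by
  refine boxCol_lt_boxCol (by omega) (by simp; omega) ?_
  rw [hL.boxRow_rotLetters (by omega), hL.boxRow_rotLetters hj]
  have := hL.boxRow_lt (show i < L.length by omega)
  omega

lemma LettersIn.boxCol_add_boxCol_rotLetters (hL : LettersIn l n L) :
    (∀ k < L.length, boxCol (rotLetters l n L) (L.length - 1 - k) + boxCol L k + 1 ≤ pfCols L) ∧
      ∀ c < pfCols L, ∃ k < L.length,
        boxCol (rotLetters l n L) (L.length - 1 - k) = c ∧ boxCol L k = pfCols L - 1 - c := by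
  refine greedy_columns_complement (ρ := boxRow L)
    (fun i j hij hj hρ => boxCol_lt_boxCol hij hj hρ) (fun i j => hL.boxCol_rotLetters_lt)
    (fun k hk hpos => exists_boxCol_succ_eq hk hpos) (fun k hk hpos => ?_)
    (fun k hk => boxCol_lt_pfCols hk)
    (fun hpos => exists_boxCol_succ_eq_pfCols (Nat.pos_of_ne_zero fun h0 => ?_))
  · obtain ⟨u, hu, hρ, hcol⟩ := exists_boxCol_succ_eq (by simp; omega) hpos
    have hrow_u := hL.boxRow_rotLetters (k := L.length - 1 - u) (by omega)
    rw [Nat.sub_sub_self (by omega)] at hrow_u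
    rw [hL.boxRow_rotLetters hk, hrow_u] at hρ
    have := hL.boxRow_lt hk
    have := hL.boxRow_lt (show L.length - 1 - u < L.length by omega)
    refine ⟨L.length - 1 - u, by omega, by omega, by omega, ?_⟩
    rwa [Nat.sub_sub_self (by omega)]
  · simp [pfCols, List.length_eq_zero_iff.1 h0, pfBoxes] at hpos

lemma LettersIn.pfCols_rotLetters (hL : LettersIn l n L) :
    pfCols (rotLetters l n L) = pfCols L := by
  obtain ⟨hsum, hcover⟩ := hL.boxCol_add_boxCol_rotLetters
  rcases Nat.eq_zero_or_pos L.length with h0 | hpos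
  · simp [pfCols, rotLetters, List.length_eq_zero_iff.1 h0, pfBoxes]
  apply le_antisymm
  · obtain ⟨u, hu, hcol⟩ :=
      exists_boxCol_succ_eq_pfCols (L := rotLetters l n L) (by simpa using hpos)
    have := hsum (L.length - 1 - u) (by simp at hu; omega)
    rw [Nat.sub_sub_self (by simp at hu; omega)] at this
    omega
  · have := boxCol_lt_pfCols hpos
    obtain ⟨k, hk, hcol, -⟩ := hcover (pfCols L - 1) (by omega)
    have := boxCol_lt_pfCols (L := rotLetters l n L) (k := L.length - 1 - k) (by simp; omega)
    omega

lemma LettersIn.compatiblePlacements (hL : LettersIn l n L) (hsorted : LettersSorted L) :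
    CompatiblePlacements n (pfCols L) L.length (fun k => n - 1 - boxRow L k)
      (fun k => l + 1 - boxVal L k) (fun k => boxCol (rotLetters l n L) (L.length - 1 - k))
      (fun k => pfCols L - 1 - boxCol L k) := by
  obtain ⟨hsum, hcover⟩ := hL.boxCol_add_boxCol_rotLetters
  have hlt := fun {k} (hk : k < L.length) => hL.boxRow_lt hk
  have hval := fun {k} (hk : k < L.length) => hL.boxVal_mem hk
  have hcols := fun {k} (hk : k < L.length) => boxCol_lt_pfCols (L := L) hk
  have hmono : ∀ i j, i < j → j < L.length → boxRow L j ≤ boxRow L i →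
      boxCol (rotLetters l n L) (L.length - 1 - j) < boxCol (rotLetters l n L) (L.length - 1 - i) ∧
        pfCols L - 1 - boxCol L j < pfCols L - 1 - boxCol L i := fun i j hij hj hρ => by
    have := boxCol_lt_boxCol hij hj hρ
    have := hcols hj
    exact ⟨hL.boxCol_rotLetters_lt hij hj hρ, by omega⟩
  refine ⟨fun i hi j hj hne hrow => ?same_row, fun i hi j hj hv hrow => ?strip,
    fun i hi j hj hv hrow => ?shadow, fun k hk => by have := hsum k hk; omega, fun c hc => ?cover,
    fun k hk => by have := hlt hk; omega, fun k hk => by have := hcols hk; omega,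
    fun k hk => by have := hval hk; omega⟩
  case same_row =>
    have := hlt hi
    have := hlt hj
    rcases Nat.lt_or_gt_of_ne hne with hij | hji
    · exact .inr (hmono i j hij hj (by omega))
    · exact .inl (hmono j i hji hi (by omega))
  case cover =>
    obtain ⟨k, hk, h₁, h₂⟩ := hcover c hc
    exact ⟨k, hk, h₁, by omega⟩
  all_goals
    have := hval hi
    have := hval hj
    have := hlt hi
    have := hlt hj
    rcases lt_trichotomy i j with hij | rfl | hji
  case strip.inl => exact hmono i j hij hj (by omega)
  case strip.inr.inl => omega
  case strip.inr.inr => rcases hsorted.boxVal_lt_or hji hi with h | h <;> omega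
  case shadow.inl => rcases hsorted.boxVal_lt_or hij hj with h | h <;> omega
  case shadow.inr.inl => omega
  case shadow.inr.inr => exact hmono j i hji hi (by omega)

lemma LettersIn.pfTab_rotLetters (hL : LettersIn l n L) :
    pfTab (rotLetters l n L) n
      = boxTab n (pfCols L) L.length (fun k => n - 1 - boxRow L k)
          (fun k => boxCol (rotLetters l n L) (L.length - 1 - k))
          (fun k => l + 1 - boxVal L k) := by
  have hinj := boxRow_boxCol_injective (L := rotLetters l n L)
  rw [length_rotLetters] at hinj
  rw [pfTab, hL.pfCols_rotLetters, length_rotLetters, boxTab_rev hinj]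
  exact boxTab_congr fun k hk => ⟨hL.boxRow_rotLetters hk, rfl, boxVal_rotLetters hk⟩

lemma LettersIn.rotTab_pfTab (hL : LettersIn l n L) :
    rotTab l (pfTab L n)
      = boxTab n (pfCols L) L.length (fun k => n - 1 - boxRow L k)
          (fun k => pfCols L - 1 - boxCol L k) (fun k => l + 1 - boxVal L k) :=
  rotTab_boxTab l (fun _ hk => hL.boxRow_lt hk) (fun _ hk => boxCol_lt_pfCols hk)

theorem LettersIn.rowEquiv_pfTab_rotLetters (hL : LettersIn l n L)
    (hsorted : LettersSorted L) :
    RowEquiv (pfTab (rotLetters l n L) n) (rotTab l (pfTab L n)) := by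
  rw [hL.pfTab_rotLetters, hL.rotTab_pfTab]
  exact (hL.compatiblePlacements hsorted).rowEquiv_boxTab

end RotLetters

lemma IsParsedWord.lettersIn {n : ℕ} {P : List (List ℕ)} (hP : IsParsedWord n P) :
    LettersIn P.length n (indexedLetters P 1) := by
  intro x hx
  obtain ⟨h₁, h₂, h, hh, hxh⟩ := mem_indexedLetters hx
  exact ⟨⟨h₁, by omega⟩, hP.2 h hh _ hxh⟩

theorem rowEquiv_Pf_rotParse {n : ℕ} {P : List (List ℕ)} (hP : IsParsedWord n P) :
    RowEquiv (Pf (rotParse n P) n) (rotTab P.length (Pf P n)) := by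
  rw [Pf_eq_pfTab, Pf_eq_pfTab, indexedLetters_rotParse]
  exact hP.lettersIn.rowEquiv_pfTab_rotLetters (lettersSorted_indexedLetters hP.1 1)

/-- Properties of the rotation map `Rot` (on ptableaux with `n` rows
and entries in `[ℓ]`, and on words in `[n]^{⊗k}`): the left-justified representative of
`Rot T` is `Rot` of the right-justified representative of `T` and vice versa; `Rot` is
an involution on ptableaux and on words; and `Pf(Rot ω) = Rot(Pf ω)` (with the parsing
of `ω` reversed accordingly). -/
theorem rot_properties (l n : ℕ) :
    (∀ T R : Tab, IsPTab T → T.rows = n →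
      (∀ r j v, T.entry r j = some v → 1 ≤ v ∧ v ≤ l) →
      RowEquiv T R → RightJustified R →
      RowEquiv (rotTab l T) (rotTab l R) ∧ LeftJustified (rotTab l R)) ∧
    (∀ T L : Tab, IsPTab T → T.rows = n →
      (∀ r j v, T.entry r j = some v → 1 ≤ v ∧ v ≤ l) →
      RowEquiv T L → LeftJustified L →
      RowEquiv (rotTab l T) (rotTab l L) ∧ RightJustified (rotTab l L)) ∧
    (∀ T : Tab, IsPTab T → (∀ r j v, T.entry r j = some v → 1 ≤ v ∧ v ≤ l) →
      rotTab l (rotTab l T) = T) ∧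
    (∀ ω, IsWord n ω → rotWord n (rotWord n ω) = ω) ∧
    (∀ P, IsParsedWord n P →
      RowEquiv (Pf (rotParse n P) n) (rotTab P.length (Pf P n))) := by
  refine ⟨fun T R _ _ hb hTR hR => ⟨rowEquiv_rotTab hTR hb, ?_⟩,
    fun T L _ _ hb hTL hL => ⟨rowEquiv_rotTab hTL hb, ?_⟩,
    fun T hT hb => rotTab_rotTab hT hb,
    fun ω hω => rotWord_rotWord hω.2,
    fun P hP => rowEquiv_Pf_rotParse hP⟩
  · exact leftJustified_rotTab hTR.2.1 (entriesIn_of_reflTransGen hTR.2.2 hb) hR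
  · exact rightJustified_rotTab hTL.2.1 (entriesIn_of_reflTransGen hTL.2.2 hb) hL

end PerfTab
end
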